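/- arXiv:2511.20389 — 5 statements merged into one kernel-verified Lean document; each statement's English description precedes it below -/
import Mathlib

section
/- Let T > 0, n a positive integer, ε = T/n, t_k = kε, τ(t) = t_k and τ̄(t) = t_{k+1} for t ∈ [t_k, t_{k+1}). Let g : [0,T] → ℝ be integrable. Then ∫₀^{t_K} ∫_{τ(t)}^{t} g(s) ds dt = ∫₀^{t_K} (τ̄(t) − t) g(t) dt for every K ∈ {0,…,n}. -/
/-!
On a cell `[a, b)` of the grid, `τ t = a` and `τ' t = b`, so the claim on that cell reads
`∫ₐᵇ ∫ₐᵗ g(s) ds dt = ∫ₐᵇ (b - s) g(s) ds`. This is Fubini on the triangle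
`a < s ≤ t ≤ b`: for fixed `s` the `t`-section is `[s, b]`, of length `b - s`.
Summing over the first `K` cells gives the theorem.
-/

open MeasureTheory Set Function intervalIntegral

variable {E : Type*} [NormedAddCommGroup E] [NormedSpace ℝ E]

theorem integral_Ioc_integral_Ioc_eq_integral_sub_smul [CompleteSpace E] {a b : ℝ} {g : ℝ → E}
    (hg : IntegrableOn g (Ioc a b)) :
    ∫ t in Ioc a b, ∫ s in Ioc a t, g s = ∫ s in Ioc a b, (b - s) • g s := by
  set μ := volume.restrict (Ioc a b)
  let F : ℝ → ℝ → E := fun t => (Iic t).indicator g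
  have hF : Integrable (uncurry F) (μ.prod μ) := by
    have : uncurry F = {p : ℝ × ℝ | p.2 ≤ p.1}.indicator (fun p => g p.2) := by
      ext ⟨t, s⟩; simp [F, indicator_apply]
    rw [this]
    exact (hg.comp_snd μ).indicator (measurableSet_le measurable_snd measurable_fst)
  calc ∫ t in Ioc a b, ∫ s in Ioc a t, g s = ∫ t, ∫ s, F t s ∂μ ∂μ := by
        refine setIntegral_congr_fun measurableSet_Ioc fun t ht => ?_
        rw [MeasureTheory.integral_indicator measurableSet_Iic,
          Measure.restrict_restrict measurableSet_Iic, Iic_inter_Ioc_of_le ht.2]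
    _ = ∫ s, ∫ t, F t s ∂μ ∂μ := integral_integral_swap hF
    _ = ∫ s in Ioc a b, (b - s) • g s := by
        refine setIntegral_congr_fun measurableSet_Ioc fun s hs => ?_
        have hF_s : (fun t => F t s) = (Ici s).indicator fun _ => g s := by
          ext t; simp [F, indicator_apply]
        have hcap : Ici s ∩ Ioc a b = Icc s b := by
          ext t; simp only [mem_inter_iff, mem_Ici, mem_Ioc, mem_Icc]
          exact ⟨fun h => ⟨h.1, h.2.2⟩, fun h => ⟨h.1, hs.1.trans_le h.1, h.2⟩⟩
        rw [hF_s, integral_indicator_const _ measurableSet_Ici,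
          measureReal_restrict_apply measurableSet_Ici, hcap, Real.volume_real_Icc_of_le hs.2]

theorem integral_integral_eq_integral_sub_smul [CompleteSpace E] {a b : ℝ} (hab : a ≤ b)
    {g : ℝ → E} (hg : IntervalIntegrable g volume a b) :
    ∫ t in a..b, ∫ s in a..t, g s = ∫ t in a..b, (b - t) • g t := by
  simp only [integral_of_le hab]
  rw [← integral_Ioc_integral_Ioc_eq_integral_sub_smul hg.1]
  exact setIntegral_congr_fun measurableSet_Ioc fun t ht => integral_of_le ht.1.le

section Cell

variable {a b : ℝ} {g : ℝ → E} {τ τ' : ℝ → ℝ}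

theorem IntervalIntegrable.integral_from_floor (hg : IntervalIntegrable g volume a b)
    (hab : a ≤ b) (hτ : ∀ t ∈ Ioo a b, τ t = a) :
    IntervalIntegrable (fun t => ∫ s in τ t..t, g s) volume a b :=
  (continuousOn_primitive_interval' hg left_mem_uIcc).intervalIntegrable.congr_uIoo
    fun t ht => by rw [hτ t (uIoo_of_le hab ▸ ht)]

theorem IntervalIntegrable.ceil_sub_smul (hg : IntervalIntegrable g volume a b)
    (hab : a ≤ b) (hτ' : ∀ t ∈ Ioo a b, τ' t = b) :
    IntervalIntegrable (fun t => (τ' t - t) • g t) volume a b :=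
  (hg.continuousOn_smul (f := fun t => b - t) (by fun_prop)).congr_uIoo
    fun t ht => by rw [hτ' t (uIoo_of_le hab ▸ ht)]

theorem integral_integral_from_floor_eq_integral_ceil_sub_smul [CompleteSpace E]
    (hg : IntervalIntegrable g volume a b) (hab : a ≤ b)
    (hτ : ∀ t ∈ Ioo a b, τ t = a) (hτ' : ∀ t ∈ Ioo a b, τ' t = b) :
    ∫ t in a..b, ∫ s in τ t..t, g s = ∫ t in a..b, (τ' t - t) • g t :=
  calc ∫ t in a..b, ∫ s in τ t..t, g s = ∫ t in a..b, ∫ s in a..t, g s :=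
        integral_congr_Ioo_of_le hab fun t ht => by rw [hτ t ht]
    _ = ∫ t in a..b, (b - t) • g t := integral_integral_eq_integral_sub_smul hab hg
    _ = ∫ t in a..b, (τ' t - t) • g t :=
        integral_congr_Ioo_of_le hab fun t ht => by rw [hτ' t ht]

end Cell

theorem sum_integral_nat_mul_adjacent_intervals {f : ℝ → E} {ε : ℝ} {K : ℕ}
    (hf : ∀ k < K, IntervalIntegrable f volume (k * ε) ((k + 1) * ε)) :
    ∑ k ∈ Finset.range K, ∫ t in k * ε..(k + 1) * ε, f t = ∫ t in 0..K * ε, f t := by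
  simpa using sum_integral_adjacent_intervals (a := fun k : ℕ => (k : ℝ) * ε)
    (by simpa using hf)

theorem stmt_7_general (T : ℝ) (hT : 0 < T) (n : ℕ) (ε : ℝ) (hε : ε = T / n)
    (τ τ' : ℝ → ℝ)
    (hτ : ∀ k : ℕ, k < n → ∀ t ∈ Ico ((k:ℝ)*ε) (((k:ℝ)+1)*ε), τ t = (k:ℝ)*ε)
    (hτ' : ∀ k : ℕ, k < n → ∀ t ∈ Ico ((k:ℝ)*ε) (((k:ℝ)+1)*ε), τ' t = ((k:ℝ)+1)*ε)
    (g : ℝ → ℝ) (hg : IntervalIntegrable g volume 0 T) :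
    ∀ K : ℕ, K ≤ n →
      ∫ t in (0:ℝ)..((K:ℝ)*ε), (∫ s in (τ t)..t, g s)
        = ∫ t in (0:ℝ)..((K:ℝ)*ε), (τ' t - t) * g t := by
  intro K hK
  have hε0 : 0 ≤ ε := hε ▸ by positivity
  have hcell_le (k : ℕ) : (k : ℝ) * ε ≤ (k + 1) * ε := by nlinarith
  have hg_cell : ∀ k < K, IntervalIntegrable g volume (k * ε) ((k + 1) * ε) := by
    intro k hk
    have hkn : (k : ℝ) + 1 ≤ n := by exact_mod_cast hk.trans_le hK
    refine hg.mono_set ?_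
    rw [uIcc_of_le (hcell_le k), uIcc_of_le hT.le]
    refine Icc_subset_Icc (by positivity) ?_
    calc ((k : ℝ) + 1) * ε ≤ n * ε := mul_le_mul_of_nonneg_right hkn hε0
      _ = T := by rw [hε, mul_div_cancel₀ T (Nat.cast_ne_zero.2 (by omega))]
  have hτ_cell : ∀ k < K, ∀ t ∈ Ioo ((k : ℝ) * ε) ((k + 1) * ε), τ t = k * ε :=
    fun k hk t ht => hτ k (hk.trans_le hK) t (Ioo_subset_Ico_self ht)
  have hτ'_cell : ∀ k < K, ∀ t ∈ Ioo ((k : ℝ) * ε) ((k + 1) * ε), τ' t = (k + 1) * ε :=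
    fun k hk t ht => hτ' k (hk.trans_le hK) t (Ioo_subset_Ico_self ht)
  rw [← sum_integral_nat_mul_adjacent_intervals fun k hk =>
      (hg_cell k hk).integral_from_floor (hcell_le k) (hτ_cell k hk),
    ← sum_integral_nat_mul_adjacent_intervals (f := fun t => (τ' t - t) * g t) fun k hk =>
      (hg_cell k hk).ceil_sub_smul (hcell_le k) (hτ'_cell k hk)]
  refine Finset.sum_congr rfl fun k hk => ?_
  rw [Finset.mem_range] at hk
  exact integral_integral_from_floor_eq_integral_ceil_sub_smul (hg_cell k hk) (hcell_le k)
    (hτ_cell k hk) (hτ'_cell k hk)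

theorem stmt_7 (T : ℝ) (hT : 0 < T) (n : ℕ) (hn : 0 < n) (ε : ℝ) (hε : ε = T / n)
    (τ τ' : ℝ → ℝ)
    (hτ : ∀ k : ℕ, k < n → ∀ t ∈ Ico ((k:ℝ)*ε) (((k:ℝ)+1)*ε), τ t = (k:ℝ)*ε)
    (hτ' : ∀ k : ℕ, k < n → ∀ t ∈ Ico ((k:ℝ)*ε) (((k:ℝ)+1)*ε), τ' t = ((k:ℝ)+1)*ε)
    (g : ℝ → ℝ) (hg : IntervalIntegrable g volume 0 T) :
    ∀ K : ℕ, K ≤ n →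
      ∫ t in (0:ℝ)..((K:ℝ)*ε), (∫ s in (τ t)..t, g s)
        = ∫ t in (0:ℝ)..((K:ℝ)*ε), (τ' t - t) * g t :=
  stmt_7_general T hT n ε hε τ τ' hτ hτ' g hg
end

section
/- Let T > 0, n a positive integer, ε = T/n, t_k = kε, τ(t) = t_k and τ̄(t) = t_{k+1} for t ∈ [t_k, t_{k+1}). Let m be a natural number and g : [0,T] → ℝ continuous. Then Σ_{k=0}^{K−1} ∫_{t_k}^{t_{k+1}} (t_{k+1} − t)^{m+1} (∫_{t_k}^{t} g(r) dr) dt = (1/(m+2)) ∫₀^{t_K} (τ̄(t) − t)^{m+2} g(t) dt for every K ∈ {0,…,n}. -/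
open MeasureTheory Set

/-!
On a cell `[a, c]`, integrate by parts against the primitive of `g`, using
`-(c - t)^(m+2)/(m+2)` as antiderivative of `(c - t)^(m+1)`: both boundary terms vanish. On the
interior of the `k`-th cell `τ̄ t = t_{k+1}`, so the right-hand integrands agree there up to a null
set, and the cell integrals add up to the integral over `[0, t_K]`.
-/

theorem integral_pow_mul_primitive_eq (m : ℕ) {g : ℝ → ℝ} {a c : ℝ} (hac : a ≤ c)
    (hg : ContinuousOn g (Icc a c)) :
    ∫ t in a..c, (c - t) ^ (m + 1) * ∫ r in a..t, g r
      = 1 / ((m : ℝ) + 2) * ∫ t in a..c, (c - t) ^ (m + 2) * g t := by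
  have hint : IntervalIntegrable g volume a c := hg.intervalIntegrable_of_Icc hac
  have hprim : ContinuousOn (fun t => ∫ r in a..t, g r) (uIcc a c) :=
    intervalIntegral.continuousOn_primitive_interval' hint left_mem_uIcc
  have hprim_deriv : ∀ x ∈ Ioo (min a c) (max a c),
      HasDerivAt (fun t => ∫ r in a..t, g r) (g x) x := by
    intro x hx
    rw [min_eq_left hac, max_eq_right hac] at hx
    have hgx : ContinuousOn g (Ioo a c) := hg.mono Ioo_subset_Icc_self
    exact intervalIntegral.integral_hasDerivAt_right
      ((hg.mono (Icc_subset_Icc_right hx.2.le)).intervalIntegrable_of_Icc hx.1.le)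
      (hgx.stronglyMeasurableAtFilter isOpen_Ioo x hx) (hgx.continuousAt (isOpen_Ioo.mem_nhds hx))
  have hpow_deriv : ∀ x, HasDerivAt (fun t => -(c - t) ^ (m + 2) / ((m : ℝ) + 2))
      ((c - x) ^ (m + 1)) x := by
    intro x
    refine ((((hasDerivAt_id x).const_sub c).fun_pow (m + 2)).fun_neg.div_const _).congr_deriv ?_
    simp only [id]
    field_simp
    push_cast
    ring
  rw [intervalIntegral.integral_congr (g := fun t => (∫ r in a..t, g r) * (c - t) ^ (m + 1))
      fun t _ => mul_comm _ _,
    intervalIntegral.integral_mul_deriv_eq_deriv_mul_of_hasDerivAt hprim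
      (fun x _ => (hpow_deriv x).continuousAt.continuousWithinAt) hprim_deriv
      (fun x _ => hpow_deriv x) hint (Continuous.intervalIntegrable (by fun_prop) _ _),
    intervalIntegral.integral_same, sub_self, zero_pow (by omega : m + 2 ≠ 0),
    ← intervalIntegral.integral_const_mul]
  simp only [neg_zero, zero_div, mul_zero, zero_mul, sub_zero, zero_sub,
    ← intervalIntegral.integral_neg]
  refine intervalIntegral.integral_congr fun t _ => ?_
  ring

section Cell

variable {m : ℕ} {g τ' : ℝ → ℝ} {a c : ℝ}

theorem eqOn_uIoo_pow_mul_of_eqOn_Ico (hac : a ≤ c) (hτ' : ∀ t ∈ Ico a c, τ' t = c) :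
    EqOn (fun t => (c - t) ^ m * g t) (fun t => (τ' t - t) ^ m * g t) (uIoo a c) := by
  intro t ht
  rw [uIoo_of_le hac] at ht
  simp only [hτ' t (Ioo_subset_Ico_self ht)]

theorem intervalIntegrable_pow_mul_of_eqOn_Ico (hac : a ≤ c) (hg : ContinuousOn g (Icc a c))
    (hτ' : ∀ t ∈ Ico a c, τ' t = c) :
    IntervalIntegrable (fun t => (τ' t - t) ^ m * g t) volume a c :=
  ((ContinuousOn.mul (by fun_prop) hg).intervalIntegrable_of_Icc hac).congr_uIoo
    (eqOn_uIoo_pow_mul_of_eqOn_Ico hac hτ')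

theorem integral_pow_mul_primitive_eq_of_eqOn_Ico (hac : a ≤ c) (hg : ContinuousOn g (Icc a c))
    (hτ' : ∀ t ∈ Ico a c, τ' t = c) :
    ∫ t in a..c, (c - t) ^ (m + 1) * ∫ r in a..t, g r
      = 1 / ((m : ℝ) + 2) * ∫ t in a..c, (τ' t - t) ^ (m + 2) * g t := by
  rw [integral_pow_mul_primitive_eq m hac hg,
    intervalIntegral.integral_congr_uIoo (eqOn_uIoo_pow_mul_of_eqOn_Ico hac hτ')]

end Cell

theorem sum_integral_uniform_grid {f : ℝ → ℝ} {ε : ℝ} (K : ℕ)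
    (hf : ∀ k < K, IntervalIntegrable f volume ((k : ℝ) * ε) (((k : ℝ) + 1) * ε)) :
    ∑ k ∈ Finset.range K, ∫ t in (k : ℝ) * ε..((k : ℝ) + 1) * ε, f t
      = ∫ t in (0 : ℝ)..(K : ℝ) * ε, f t := by
  simpa using intervalIntegral.sum_integral_adjacent_intervals (a := fun k : ℕ => (k : ℝ) * ε)
    (fun k hk => by simpa using hf k hk)

theorem stmt_8_general (T : ℝ) (hT : 0 < T) (n : ℕ) (ε : ℝ) (hε : ε = T / n)
    (τ' : ℝ → ℝ)
    (hτ' : ∀ k : ℕ, k < n → ∀ t ∈ Ico ((k:ℝ)*ε) (((k:ℝ)+1)*ε), τ' t = ((k:ℝ)+1)*ε)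
    (m : ℕ) (g : ℝ → ℝ) (hg : ContinuousOn g (Icc (0:ℝ) T)) :
    ∀ K : ℕ, K ≤ n →
      ∑ k ∈ Finset.range K,
          ∫ t in ((k:ℝ)*ε)..(((k:ℝ)+1)*ε),
            (((k:ℝ)+1)*ε - t)^(m+1) * (∫ r in ((k:ℝ)*ε)..t, g r)
        = (1/((m:ℝ)+2)) * ∫ t in (0:ℝ)..((K:ℝ)*ε), (τ' t - t)^(m+2) * g t := by
  intro K hK
  have hε0 : 0 ≤ ε := hε ▸ by positivity
  have hcell_le (k : ℕ) : (k : ℝ) * ε ≤ ((k : ℝ) + 1) * ε := by nlinarith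
  have hg_cell (k : ℕ) (hk : k < K) :
      ContinuousOn g (Icc ((k : ℝ) * ε) (((k : ℝ) + 1) * ε)) := by
    have hkn : (k : ℝ) + 1 ≤ n := by exact_mod_cast hk.trans_le hK
    have hnε : (n : ℝ) * ε = T := by
      rw [hε]; field_simp [(Nat.cast_pos.2 (k.zero_le.trans_lt (hk.trans_le hK))).ne']
    exact hg.mono (Icc_subset_Icc (by positivity) (by nlinarith))
  rw [Finset.sum_congr rfl fun k hk =>
      integral_pow_mul_primitive_eq_of_eqOn_Ico (hcell_le k) (hg_cell k (Finset.mem_range.1 hk))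
        (hτ' k ((Finset.mem_range.1 hk).trans_le hK)),
    ← Finset.mul_sum, sum_integral_uniform_grid K fun k hk =>
      intervalIntegrable_pow_mul_of_eqOn_Ico (hcell_le k) (hg_cell k hk) (hτ' k (hk.trans_le hK))]

theorem stmt_8 (T : ℝ) (hT : 0 < T) (n : ℕ) (hn : 0 < n) (ε : ℝ) (hε : ε = T / n)
    (τ τ' : ℝ → ℝ)
    (hτ : ∀ k : ℕ, k < n → ∀ t ∈ Ico ((k:ℝ)*ε) (((k:ℝ)+1)*ε), τ t = (k:ℝ)*ε)
    (hτ' : ∀ k : ℕ, k < n → ∀ t ∈ Ico ((k:ℝ)*ε) (((k:ℝ)+1)*ε), τ' t = ((k:ℝ)+1)*ε)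
    (m : ℕ) (g : ℝ → ℝ) (hg : ContinuousOn g (Icc (0:ℝ) T)) :
    ∀ K : ℕ, K ≤ n →
      ∑ k ∈ Finset.range K,
          ∫ t in ((k:ℝ)*ε)..(((k:ℝ)+1)*ε),
            (((k:ℝ)+1)*ε - t)^(m+1) * (∫ r in ((k:ℝ)*ε)..t, g r)
        = (1/((m:ℝ)+2)) * ∫ t in (0:ℝ)..((K:ℝ)*ε), (τ' t - t)^(m+2) * g t :=
  stmt_8_general T hT n ε hε τ' hτ' m g hg
end

section
/- Let T > 0, n a positive integer, ε = T/n, t_k = kε, τ(t) = t_k and τ̄(t) = t_{k+1} for t ∈ [t_k, t_{k+1}). Let i be a natural number, K ∈ {1,…,n}, and g : [0,T] → ℝ absolutely continuous with weak derivative g′. Then ∫₀^{t_K} (τ̄(t) − t)^i g(τ(t)) dt = (ε^i/(i+1)) ( ∫₀^{t_K} g(t) dt − ∫₀^{t_K} (τ̄(t) − t) g′(t) dt ). -/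
/-!
On each cell `[t_k, t_{k+1})` the integrand on the left is `(t_{k+1} - t)^i g(t_k)`, whose
integral is `ε^{i+1}/(i+1) · g(t_k)`. Writing `g(t) = g(t_k) + ∫_{t_k}^t g'` and exchanging the
order of integration (here: integrating the absolutely continuous primitive of `g'` by parts)
gives `∫_{t_k}^{t_{k+1}} g = ε g(t_k) + ∫_{t_k}^{t_{k+1}} (t_{k+1} - s) g'(s)`, which is the
claimed identity on one cell; summing over the cells gives the theorem.
-/

open MeasureTheory Set

theorem integral_intervalIntegral_eq_integral_sub_mul {f : ℝ → ℝ} {a b : ℝ}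
    (hf : IntervalIntegrable f volume a b) :
    ∫ t in a..b, (∫ s in a..t, f s) = ∫ s in a..b, (b - s) * f s := by
  have hF := hf.absolutelyContinuousOnInterval_intervalIntegral (c := a) left_mem_uIcc
  have hG : AbsolutelyContinuousOnInterval (fun t : ℝ => t - b) a b :=
    (contDiff_id.sub contDiff_const).contDiffOn.absolutelyContinuousOnInterval
  have hparts := hF.integral_mul_deriv_eq_deriv_mul hG
  have hderiv : ∫ t in a..b, deriv (fun x => ∫ s in a..x, f s) t * (t - b)
      = ∫ t in a..b, f t * (t - b) := by
    refine intervalIntegral.integral_congr_ae ?_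
    filter_upwards [hf.ae_hasDerivAt_integral] with t ht htI
    rw [(ht (uIoc_subset_uIcc htI) a left_mem_uIcc).deriv]
  simp only [deriv_sub_const, deriv_id'', mul_one, sub_self, mul_zero,
    intervalIntegral.integral_same, zero_mul, zero_sub, hderiv] at hparts
  rw [hparts, ← intervalIntegral.integral_neg]
  congr 1; ext s; ring

theorem integral_eq_mul_add_integral_sub_mul_deriv {g g' : ℝ → ℝ} {a b : ℝ}
    (hg' : IntervalIntegrable g' volume a b)
    (hg : ∀ t ∈ uIcc a b, g t = g a + ∫ s in a..t, g' s) :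
    ∫ t in a..b, g t = (b - a) * g a + ∫ t in a..b, (b - t) * g' t := by
  have hprim : IntervalIntegrable (fun t => ∫ s in a..t, g' s) volume a b :=
    (hg'.absolutelyContinuousOnInterval_intervalIntegral left_mem_uIcc).continuousOn
      |>.intervalIntegrable
  rw [intervalIntegral.integral_congr hg,
    intervalIntegral.integral_add intervalIntegrable_const hprim, intervalIntegral.integral_const,
    smul_eq_mul, integral_intervalIntegral_eq_integral_sub_mul hg']

theorem integral_sub_pow_mul_eq {g g' : ℝ → ℝ} {a b : ℝ} (i : ℕ)
    (hg' : IntervalIntegrable g' volume a b)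
    (hg : ∀ t ∈ uIcc a b, g t = g a + ∫ s in a..t, g' s) :
    ∫ t in a..b, (b - t) ^ i * g a
      = (b - a) ^ i / (i + 1) * ((∫ t in a..b, g t) - ∫ t in a..b, (b - t) * g' t) := by
  have hpow : ∫ t in a..b, (b - t) ^ i = (b - a) ^ (i + 1) / (i + 1) := by
    simp [intervalIntegral.integral_comp_sub_left (fun x => x ^ i), integral_pow]
  rw [intervalIntegral.integral_mul_const, hpow, integral_eq_mul_add_integral_sub_mul_deriv hg' hg]
  field_simp
  ring

theorem integral_eq_sum_of_eqOn_uIoo {E : Type*} [NormedAddCommGroup E] [NormedSpace ℝ E]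
    {f : ℝ → E} {F : ℕ → ℝ → E} {a : ℕ → ℝ} {K : ℕ}
    (hF : ∀ k < K, IntervalIntegrable (F k) volume (a k) (a (k + 1)))
    (hf : ∀ k < K, EqOn (F k) f (uIoo (a k) (a (k + 1)))) :
    ∫ t in a 0..a K, f t = ∑ k ∈ Finset.range K, ∫ t in a k..a (k + 1), F k t := by
  rw [← intervalIntegral.sum_integral_adjacent_intervals fun k hk =>
    (hF k hk).congr_uIoo (hf k hk)]
  exact Finset.sum_congr rfl fun k hk =>
    (intervalIntegral.integral_congr_uIoo (hf k (Finset.mem_range.1 hk))).symm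

theorem integral_nat_mul_eq_sum_of_eqOn_uIoo {E : Type*} [NormedAddCommGroup E]
    [NormedSpace ℝ E] {f : ℝ → E} {F : ℕ → ℝ → E} {ε : ℝ} {K : ℕ}
    (hF : ∀ k < K, IntervalIntegrable (F k) volume (k * ε) ((k + 1) * ε))
    (hf : ∀ k < K, EqOn (F k) f (uIoo (k * ε) ((k + 1) * ε))) :
    ∫ t in 0..K * ε, f t = ∑ k ∈ Finset.range K, ∫ t in k * ε..(k + 1) * ε, F k t := by
  simpa using integral_eq_sum_of_eqOn_uIoo (a := fun k : ℕ => (k : ℝ) * ε)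
    (by simpa using hF) (by simpa using hf)

theorem uIcc_nat_mul_subset_uIcc {ε : ℝ} (hε : 0 ≤ ε) {k n : ℕ} (hk : k < n) :
    uIcc ((k : ℝ) * ε) ((k + 1) * ε) ⊆ uIcc 0 (n * ε) := by
  have hkn : (k : ℝ) + 1 ≤ n := by exact_mod_cast hk
  rw [uIcc_of_le (by nlinarith), uIcc_of_le (by positivity)]
  exact Icc_subset_Icc (by positivity) (mul_le_mul_of_nonneg_right hkn hε)

theorem forall_eq_add_integral_of_uIcc_subset {g g' : ℝ → ℝ} {c d a b : ℝ}
    (hg' : IntervalIntegrable g' volume c d)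
    (hg : ∀ t ∈ uIcc c d, g t = g c + ∫ s in c..t, g' s) (hab : uIcc a b ⊆ uIcc c d) :
    ∀ t ∈ uIcc a b, g t = g a + ∫ s in a..t, g' s := by
  intro t ht
  have hc : c ∈ uIcc c d := left_mem_uIcc
  have ha := hab left_mem_uIcc
  have ht' := hab ht
  rw [hg t ht', hg a ha, ← intervalIntegral.integral_interval_sub_left
    (hg'.mono_set (uIcc_subset_uIcc hc ht')) (hg'.mono_set (uIcc_subset_uIcc hc ha))]
  ring

theorem stmt_9_general (T : ℝ) (hT : 0 < T) (n : ℕ) (ε : ℝ) (hε : ε = T / n)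
    (τ τ' : ℝ → ℝ)
    (hτ : ∀ k : ℕ, k < n → ∀ t ∈ Ico ((k:ℝ)*ε) (((k:ℝ)+1)*ε), τ t = (k:ℝ)*ε)
    (hτ' : ∀ k : ℕ, k < n → ∀ t ∈ Ico ((k:ℝ)*ε) (((k:ℝ)+1)*ε), τ' t = ((k:ℝ)+1)*ε)
    (i : ℕ) (g g' : ℝ → ℝ) (hg' : IntervalIntegrable g' volume 0 T)
    (hg : ∀ t ∈ Icc (0:ℝ) T, g t = g 0 + ∫ s in (0:ℝ)..t, g' s) :
    ∀ K : ℕ, 1 ≤ K → K ≤ n →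
      ∫ t in (0:ℝ)..((K:ℝ)*ε), (τ' t - t)^i * g (τ t)
        = (ε^i/((i:ℝ)+1)) *
          ((∫ t in (0:ℝ)..((K:ℝ)*ε), g t)
            - ∫ t in (0:ℝ)..((K:ℝ)*ε), (τ' t - t) * g' t) := by
  intro K hK1 hKn
  have hn : (0 : ℝ) < n := by exact_mod_cast hK1.trans hKn
  have hε0 : 0 < ε := hε ▸ div_pos hT hn
  obtain rfl : T = n * ε := by rw [hε]; field_simp
  rw [← uIcc_of_le hT.le] at hg
  have hcell : ∀ k < K, uIcc ((k : ℝ) * ε) ((k + 1) * ε) ⊆ uIcc 0 (n * ε) :=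
    fun k hk => uIcc_nat_mul_subset_uIcc hε0.le (hk.trans_le hKn)
  have hstep : ∀ k < K, ∀ t ∈ uIoo ((k : ℝ) * ε) ((k + 1) * ε),
      τ t = k * ε ∧ τ' t = (k + 1) * ε := by
    intro k hk t ht
    have ht' : t ∈ Ico ((k : ℝ) * ε) ((k + 1) * ε) :=
      Ioo_subset_Ico_self (uIoo_of_le (by linarith : (k : ℝ) * ε ≤ (k + 1) * ε) ▸ ht)
    exact ⟨hτ k (hk.trans_le hKn) t ht', hτ' k (hk.trans_le hKn) t ht'⟩
  have hgc : ContinuousOn g (uIcc 0 (n * ε)) :=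
    (continuousOn_const.add (hg'.absolutelyContinuousOnInterval_intervalIntegral
      left_mem_uIcc).continuousOn).congr hg
  rw [integral_nat_mul_eq_sum_of_eqOn_uIoo (F := fun k t => ((k + 1) * ε - t) ^ i * g (k * ε))
      (fun k _ => (by fun_prop : Continuous _).intervalIntegrable _ _)
      (fun k hk t ht => by rw [(hstep k hk t ht).1, (hstep k hk t ht).2]),
    integral_nat_mul_eq_sum_of_eqOn_uIoo (F := fun _ => g)
      (fun k hk => (hgc.mono (hcell k hk)).intervalIntegrable) (fun _ _ => eqOn_refl _ _),
    integral_nat_mul_eq_sum_of_eqOn_uIoo (F := fun k t => ((k + 1) * ε - t) * g' t)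
      (fun k hk => (hg'.mono_set (hcell k hk)).continuousOn_mul (by fun_prop))
      (fun k hk t ht => by rw [(hstep k hk t ht).2]),
    ← Finset.sum_sub_distrib, Finset.mul_sum]
  refine Finset.sum_congr rfl fun k hk => ?_
  have hk := hcell k (Finset.mem_range.1 hk)
  rw [integral_sub_pow_mul_eq i (hg'.mono_set hk) (forall_eq_add_integral_of_uIcc_subset hg' hg hk),
    show ((k : ℝ) + 1) * ε - k * ε = ε by ring]

theorem stmt_9 (T : ℝ) (hT : 0 < T) (n : ℕ) (hn : 0 < n) (ε : ℝ) (hε : ε = T / n)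
    (τ τ' : ℝ → ℝ)
    (hτ : ∀ k : ℕ, k < n → ∀ t ∈ Ico ((k:ℝ)*ε) (((k:ℝ)+1)*ε), τ t = (k:ℝ)*ε)
    (hτ' : ∀ k : ℕ, k < n → ∀ t ∈ Ico ((k:ℝ)*ε) (((k:ℝ)+1)*ε), τ' t = ((k:ℝ)+1)*ε)
    (i : ℕ) (g g' : ℝ → ℝ) (hg' : IntervalIntegrable g' volume 0 T)
    (hg : ∀ t ∈ Icc (0:ℝ) T, g t = g 0 + ∫ s in (0:ℝ)..t, g' s) :
    ∀ K : ℕ, 1 ≤ K → K ≤ n →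
      ∫ t in (0:ℝ)..((K:ℝ)*ε), (τ' t - t)^i * g (τ t)
        = (ε^i/((i:ℝ)+1)) *
          ((∫ t in (0:ℝ)..((K:ℝ)*ε), g t)
            - ∫ t in (0:ℝ)..((K:ℝ)*ε), (τ' t - t) * g' t) :=
  stmt_9_general T hT n ε hε τ τ' hτ hτ' i g g' hg' hg
end

section
/- Let T > 0, i a natural number. There exists a constant C (depending only on T and i) such that for every positive integer n with ε = T/n, grid t_k = kε, τ(t) = t_k and τ̄(t) = t_{k+1} on [t_k, t_{k+1}), and every twice continuously differentiable f : [0,T] → ℝ: | (i+1) ∫₀^T (τ̄(t) − t)^i f(τ(t)) dt − ε^i ∫₀^T f(t) dt + (ε^{i+1}/2) ∫₀^T f′(t) dt | ≤ C ε^{i+2} sup_{t∈[0,T]} |f″(t)|. -/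
/-!
On the cell `[kε, (k+1)ε)` the integrand `(τ' t - t)^i f(τ t)` is `((k+1)ε - t)^i f(kε)`, whose
integral is `ε^(i+1) f(kε) / (i+1)`. Hence the quantity to bound is `∑ₖ ε^i Eₖ` with
`Eₖ = ε f(kε) - ∫ f + (ε/2) ∫ f'` over the cell. Expanding `f` to second order and `f'` to first
order at `kε` gives `|Eₖ| ≤ (1/6 + 1/4) M ε³`, and summing over the `n = T/ε` cells gives
`C = 5T/12`.
-/

open MeasureTheory Set

lemma abs_integral_le_of_abs_le_mul_pow {g : ℝ → ℝ} {a b c : ℝ} (m : ℕ) (hab : a ≤ b)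
    (hg : ∀ t ∈ Ioc a b, |g t| ≤ c * (t - a) ^ m) :
    |∫ t in a..b, g t| ≤ c * (b - a) ^ (m + 1) / (m + 1) :=
  calc |∫ t in a..b, g t| ≤ ∫ t in a..b, c * (t - a) ^ m := by
        simpa only [Real.norm_eq_abs] using intervalIntegral.norm_integral_le_of_norm_le (f := g) hab
          (ae_of_all _ hg) ((by fun_prop : Continuous fun t => c * (t - a) ^ m).intervalIntegrable _ _)
    _ = c * (b - a) ^ (m + 1) / (m + 1) := by
        rw [intervalIntegral.integral_const_mul, intervalIntegral.integral_comp_sub_right (· ^ m),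
          integral_pow, sub_self, zero_pow m.succ_ne_zero, sub_zero, mul_div_assoc]

section Taylor

variable {g g' g'' : ℝ → ℝ} {a b M : ℝ}

theorem integral_eq_sub_of_hasDerivWithinAt_Icc (hab : a ≤ b)
    (hg : ∀ t ∈ Icc a b, HasDerivWithinAt g (g' t) (Icc a b) t)
    (hg' : IntervalIntegrable g' volume a b) : ∫ t in a..b, g' t = g b - g a :=
  intervalIntegral.integral_eq_sub_of_hasDerivAt_of_le hab (HasDerivWithinAt.continuousOn hg)
    (fun t ht => (hg t (Ioo_subset_Icc_self ht)).hasDerivAt (Icc_mem_nhds ht.1 ht.2)) hg'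

lemma abs_integral_sub_mul_le (hab : a ≤ b)
    (hg : ∀ t ∈ Icc a b, HasDerivWithinAt g (g' t) (Icc a b) t)
    (hM : ∀ t ∈ Icc a b, |g' t| ≤ M) :
    |(∫ t in a..b, g t) - (b - a) * g a| ≤ M * (b - a) ^ 2 / 2 := by
  have hint : IntervalIntegrable g volume a b :=
    (HasDerivWithinAt.continuousOn hg).intervalIntegrable_of_Icc hab
  have hlip : ∀ t ∈ Ioc a b, |g t - g a| ≤ M * (t - a) ^ 1 := fun t ht => by
    simpa [abs_of_nonneg (sub_nonneg.2 ht.1.le)] using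
      Convex.norm_image_sub_le_of_norm_hasDerivWithin_le hg hM (convex_Icc a b)
        (left_mem_Icc.2 hab) (Ioc_subset_Icc_self ht)
  have h := abs_integral_le_of_abs_le_mul_pow 1 hab hlip
  rw [intervalIntegral.integral_sub hint intervalIntegrable_const,
    intervalIntegral.integral_const, smul_eq_mul] at h
  convert h using 1; ring

lemma abs_sub_sub_deriv_mul_le (hg : ∀ t ∈ Icc a b, HasDerivWithinAt g (g' t) (Icc a b) t)
    (hg' : ∀ t ∈ Icc a b, HasDerivWithinAt g' (g'' t) (Icc a b) t)
    (hM : ∀ t ∈ Icc a b, |g'' t| ≤ M) {t : ℝ} (ht : t ∈ Icc a b) :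
    |g t - g a - g' a * (t - a)| ≤ M * (t - a) ^ 2 / 2 := by
  have hsub : Icc a t ⊆ Icc a b := Icc_subset_Icc_right ht.2
  have hg't : IntervalIntegrable g' volume a t :=
    ((HasDerivWithinAt.continuousOn hg').mono hsub).intervalIntegrable_of_Icc ht.1
  have h := abs_integral_sub_mul_le ht.1 (fun s hs => (hg' s (hsub hs)).mono hsub)
    fun s hs => hM s (hsub hs)
  rw [integral_eq_sub_of_hasDerivWithinAt_Icc ht.1 (fun s hs => (hg s (hsub hs)).mono hsub) hg't]
    at h
  convert h using 2; ring

lemma abs_integral_sub_taylor_le (hab : a ≤ b)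
    (hg : ∀ t ∈ Icc a b, HasDerivWithinAt g (g' t) (Icc a b) t)
    (hg' : ∀ t ∈ Icc a b, HasDerivWithinAt g' (g'' t) (Icc a b) t)
    (hM : ∀ t ∈ Icc a b, |g'' t| ≤ M) :
    |(∫ t in a..b, g t) - ((b - a) * g a + (b - a) ^ 2 / 2 * g' a)| ≤ M * (b - a) ^ 3 / 6 := by
  have hint : IntervalIntegrable g volume a b :=
    (HasDerivWithinAt.continuousOn hg).intervalIntegrable_of_Icc hab
  have h := abs_integral_le_of_abs_le_mul_pow 2 (c := M / 2) hab fun t ht => by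
    convert abs_sub_sub_deriv_mul_le hg hg' hM (Ioc_subset_Icc_self ht) using 1; ring
  rw [intervalIntegral.integral_sub (hint.sub intervalIntegrable_const)
      (Continuous.intervalIntegrable (by fun_prop) _ _),
    intervalIntegral.integral_sub hint intervalIntegrable_const, intervalIntegral.integral_const,
    intervalIntegral.integral_const_mul, intervalIntegral.integral_comp_sub_right (fun t => t),
    integral_id, smul_eq_mul] at h
  refine (Eq.trans_le ?_ h).trans_eq ?_
  · congr 1; ring
  · push_cast; ring

end Taylor

noncomputable def correctedLeftRuleError (f f' : ℝ → ℝ) (a b : ℝ) : ℝ :=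
  (b - a) * f a - (∫ t in a..b, f t) + (b - a) / 2 * ∫ t in a..b, f' t

lemma abs_correctedLeftRuleError_le {f f' f'' : ℝ → ℝ} {a b M : ℝ} (hab : a ≤ b)
    (hf : ∀ t ∈ Icc a b, HasDerivWithinAt f (f' t) (Icc a b) t)
    (hf' : ∀ t ∈ Icc a b, HasDerivWithinAt f' (f'' t) (Icc a b) t)
    (hM : ∀ t ∈ Icc a b, |f'' t| ≤ M) :
    |correctedLeftRuleError f f' a b| ≤ 5 / 12 * M * (b - a) ^ 3 := by
  have h₂ := abs_integral_sub_taylor_le hab hf hf' hM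
  have h₁ := abs_integral_sub_mul_le hab hf' hM
  have hba : 0 ≤ (b - a) / 2 := by linarith
  calc |correctedLeftRuleError f f' a b|
      = |-((∫ t in a..b, f t) - ((b - a) * f a + (b - a) ^ 2 / 2 * f' a))
          + (b - a) / 2 * ((∫ t in a..b, f' t) - (b - a) * f' a)| := by
        unfold correctedLeftRuleError; congr 1; ring
    _ ≤ M * (b - a) ^ 3 / 6 + (b - a) / 2 * (M * (b - a) ^ 2 / 2) := by
        refine (abs_add_le _ _).trans (add_le_add (by rwa [abs_neg]) ?_)
        rw [abs_mul, abs_of_nonneg hba]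
        exact mul_le_mul_of_nonneg_left h₁ hba
    _ = 5 / 12 * M * (b - a) ^ 3 := by ring

section StepFunction

variable {τ τ' f : ℝ → ℝ} {a b : ℝ}

lemma eqOn_pow_sub_mul_comp (i : ℕ) (hτ : ∀ t ∈ Ico a b, τ t = a)
    (hτ' : ∀ t ∈ Ico a b, τ' t = b) :
    EqOn (fun t => (τ' t - t) ^ i * f (τ t)) (fun t => (b - t) ^ i * f a) (Ioo a b) :=
  fun t ht => by simp only [hτ t (Ioo_subset_Ico_self ht), hτ' t (Ioo_subset_Ico_self ht)]

lemma intervalIntegrable_pow_sub_mul_comp (i : ℕ) (hab : a ≤ b) (hτ : ∀ t ∈ Ico a b, τ t = a)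
    (hτ' : ∀ t ∈ Ico a b, τ' t = b) :
    IntervalIntegrable (fun t => (τ' t - t) ^ i * f (τ t)) volume a b :=
  ((by fun_prop : Continuous fun t => (b - t) ^ i * f a).intervalIntegrable a b).congr_uIoo
    (uIoo_of_le hab ▸ (eqOn_pow_sub_mul_comp i hτ hτ').symm)

lemma integral_pow_sub_mul_comp (i : ℕ) (hab : a ≤ b) (hτ : ∀ t ∈ Ico a b, τ t = a)
    (hτ' : ∀ t ∈ Ico a b, τ' t = b) :
    ∫ t in a..b, (τ' t - t) ^ i * f (τ t) = (b - a) ^ (i + 1) / (i + 1) * f a := by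
  rw [intervalIntegral.integral_congr_Ioo_of_le hab (eqOn_pow_sub_mul_comp i hτ hτ'),
    intervalIntegral.integral_mul_const, intervalIntegral.integral_comp_sub_left (· ^ i),
    integral_pow, sub_self, zero_pow i.succ_ne_zero, sub_zero]

end StepFunction

section Grid

variable {ε : ℝ} {n : ℕ}

lemma integral_eq_sum_integral_grid {g : ℝ → ℝ}
    (hg : ∀ k < n, IntervalIntegrable g volume (k * ε) ((k + 1) * ε)) :
    ∫ t in (0 : ℝ)..n * ε, g t = ∑ k ∈ Finset.range n, ∫ t in k * ε..(k + 1) * ε, g t := by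
  have h := intervalIntegral.sum_integral_adjacent_intervals (a := fun k : ℕ => (k : ℝ) * ε)
    (μ := volume) (f := g) (by simpa only [Nat.cast_succ] using hg)
  simpa only [Nat.cast_zero, zero_mul, Nat.cast_succ] using h.symm

lemma step_integral_error_eq_sum_correctedLeftRuleError {τ τ' f f' : ℝ → ℝ} (i : ℕ)
    (hε : 0 ≤ ε)
    (hτ : ∀ k < n, ∀ t ∈ Ico ((k : ℝ) * ε) ((k + 1) * ε), τ t = k * ε)
    (hτ' : ∀ k < n, ∀ t ∈ Ico ((k : ℝ) * ε) ((k + 1) * ε), τ' t = (k + 1) * ε)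
    (hf : ∀ k < n, IntervalIntegrable f volume (k * ε) ((k + 1) * ε))
    (hf' : ∀ k < n, IntervalIntegrable f' volume (k * ε) ((k + 1) * ε)) :
    ((i : ℝ) + 1) * (∫ t in (0 : ℝ)..n * ε, (τ' t - t) ^ i * f (τ t))
        - ε ^ i * (∫ t in (0 : ℝ)..n * ε, f t) + ε ^ (i + 1) / 2 * (∫ t in (0 : ℝ)..n * ε, f' t)
      = ∑ k ∈ Finset.range n, ε ^ i * correctedLeftRuleError f f' (k * ε) ((k + 1) * ε) := by
  have hstep (k : ℕ) : ((k : ℝ) + 1) * ε - k * ε = ε := by ring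
  have hle (k : ℕ) : (k : ℝ) * ε ≤ (k + 1) * ε := by nlinarith
  rw [integral_eq_sum_integral_grid fun k hk =>
      intervalIntegrable_pow_sub_mul_comp i (hle k) (hτ k hk) (hτ' k hk),
    integral_eq_sum_integral_grid hf, integral_eq_sum_integral_grid hf']
  simp only [Finset.mul_sum, ← Finset.sum_sub_distrib, ← Finset.sum_add_distrib]
  refine Finset.sum_congr rfl fun k hk => ?_
  rw [integral_pow_sub_mul_comp i (hle k) (hτ k (Finset.mem_range.1 hk))
    (hτ' k (Finset.mem_range.1 hk)), correctedLeftRuleError, hstep k]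
  field_simp
  ring

end Grid

theorem stmt_10 (T : ℝ) (hT : 0 < T) (i : ℕ) :
    ∃ C : ℝ, ∀ n : ℕ, 0 < n → ∀ ε : ℝ, ε = T / n →
      ∀ τ τ' : ℝ → ℝ,
        (∀ k : ℕ, k < n → ∀ t ∈ Ico ((k:ℝ)*ε) (((k:ℝ)+1)*ε), τ t = (k:ℝ)*ε) →
        (∀ k : ℕ, k < n → ∀ t ∈ Ico ((k:ℝ)*ε) (((k:ℝ)+1)*ε), τ' t = ((k:ℝ)+1)*ε) →
      ∀ f f' f'' : ℝ → ℝ, ∀ M : ℝ,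
        (∀ t ∈ Icc (0:ℝ) T, HasDerivWithinAt f (f' t) (Icc (0:ℝ) T) t) →
        (∀ t ∈ Icc (0:ℝ) T, HasDerivWithinAt f' (f'' t) (Icc (0:ℝ) T) t) →
        ContinuousOn f'' (Icc (0:ℝ) T) →
        (∀ t ∈ Icc (0:ℝ) T, |f'' t| ≤ M) →
        |((i:ℝ)+1) * (∫ t in (0:ℝ)..T, (τ' t - t)^i * f (τ t))
            - ε^i * (∫ t in (0:ℝ)..T, f t)
            + (ε^(i+1)/2) * (∫ t in (0:ℝ)..T, f' t)|
          ≤ C * ε^(i+2) * M := by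
  refine ⟨5 / 12 * T, fun n hn ε hε τ τ' hτ hτ' f f' f'' M hf hf' _ hM => ?_⟩
  have hε0 : 0 ≤ ε := hε ▸ by positivity
  have hT_eq : T = n * ε := by rw [hε]; field_simp
  have hle (k : ℕ) : (k : ℝ) * ε ≤ (k + 1) * ε := by nlinarith
  have hsub : ∀ k < n, Icc ((k : ℝ) * ε) ((k + 1) * ε) ⊆ Icc 0 T := fun k hk =>
    Icc_subset_Icc (by positivity) (by rw [hT_eq]; gcongr; exact_mod_cast hk)
  have hint {g g' : ℝ → ℝ} (hg : ∀ t ∈ Icc 0 T, HasDerivWithinAt g (g' t) (Icc 0 T) t) :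
      ∀ k < n, IntervalIntegrable g volume (k * ε) ((k + 1) * ε) := fun k hk =>
    ((HasDerivWithinAt.continuousOn hg).mono (hsub k hk)).intervalIntegrable_of_Icc (hle k)
  have hcell : ∀ k < n,
      |correctedLeftRuleError f f' (k * ε) ((k + 1) * ε)| ≤ 5 / 12 * M * ε ^ 3 := fun k hk => by
    simpa only [add_one_mul, add_sub_cancel_left] using abs_correctedLeftRuleError_le (hle k)
      (fun t ht => (hf t (hsub k hk ht)).mono (hsub k hk))
      (fun t ht => (hf' t (hsub k hk ht)).mono (hsub k hk)) fun t ht => hM t (hsub k hk ht)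
  rw [hT_eq, step_integral_error_eq_sum_correctedLeftRuleError i hε0 hτ hτ' (hint hf) (hint hf')]
  calc _ ≤ ∑ k ∈ Finset.range n, ε ^ i * (5 / 12 * M * ε ^ 3) := by
        refine (Finset.abs_sum_le_sum_abs _ _).trans (Finset.sum_le_sum fun k hk => ?_)
        rw [abs_mul, abs_of_nonneg (by positivity)]
        exact mul_le_mul_of_nonneg_left (hcell k (Finset.mem_range.1 hk)) (by positivity)
    _ = 5 / 12 * (n * ε) * ε ^ (i + 2) * M := by
        rw [Finset.sum_const, Finset.card_range, nsmul_eq_mul]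
        ring
end

section
/- Let ε > 0 and let h : [0,∞) → ℝ be the ε-periodic function with h(t) = ε − t on [0,ε). Define the operator L acting on bounded measurable ε-periodic functions g by (Lg)(t) = ∫₀^t (ḡ − g(s)) ds where ḡ = (1/ε)∫₀^ε g. Then for every natural number i, the restriction of L^i h to [0,ε) is a polynomial in t of degree at most i+1 whose coefficients are of the form C_{i,j} ε^{i−j+1} (j = 0,…,i+1), with C_{i,j} rational constants independent of ε; in particular, the mean (1/ε)∫₀^ε (L^i h)(t) dt equals α_i ε^{i+1} for rational constants α_i independent of ε, with α₀ = 1/2. -/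
/-!
On `[0, ε)` the function `h` is the polynomial `ε - t`, and `(L g)(t)` only involves `g` on
`[0, t] ⊆ [0, ε)` and the mean of `g` over `[0, ε]`, which does not see the endpoint `ε`. Hence if
`g` agrees with a polynomial `p` on `[0, ε)`, then `L g` agrees there with `t ↦ p̄ t - ∫₀ᵗ p`.
Integrating termwise keeps the polynomial homogeneous of degree `i + 1` in `(ε, t)`, which is the
recursion for the `C i j`, and the mean of `∑ C i j ε ^ (i + 1 - j) t ^ j` over `[0, ε]` is
`ε ^ (i + 1) ∑ C i j / (j + 1)`.
-/

open MeasureTheory Set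

/-- The operator `L` acting on a function `g`:
`(L g)(t) = ∫₀ᵗ (ḡ − g(s)) ds` where `ḡ = (1/ε) ∫₀^ε g`. -/
noncomputable def Lop (ε : ℝ) (g : ℝ → ℝ) : ℝ → ℝ :=
  fun t => ∫ s in (0:ℝ)..t, ((1/ε) * (∫ u in (0:ℝ)..ε, g u) - g s)

namespace Sawtooth

open Finset

def polyMean (n : ℕ) (c : ℕ → ℚ) : ℚ := ∑ j ∈ range n, c j / (j + 1)

def coeff : ℕ → ℕ → ℚ
  | 0, 0 => 1
  | 0, 1 => -1
  | 0, _ + 2 => 0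
  | _ + 1, 0 => 0
  | i + 1, 1 => polyMean (i + 2) (coeff i) - coeff i 0
  | i + 1, j + 2 => -coeff i (j + 1) / (j + 2)

/-- The paper's `α i`, defined directly as the mean over `[0, 1]` of `t ↦ ∑ C i j t ^ j`
rather than by its recursion. -/
def mean (i : ℕ) : ℚ := polyMean (i + 2) (coeff i)

noncomputable def sawPoly (ε : ℝ) (i : ℕ) (t : ℝ) : ℝ :=
  ∑ j ∈ range (i + 2), (coeff i j : ℝ) * ε ^ (i + 1 - j) * t ^ j

theorem integral_sum_monomials (n : ℕ) (a : ℕ → ℝ) (b : ℝ) :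
    ∫ t in (0:ℝ)..b, ∑ j ∈ range n, a j * t ^ j
      = ∑ j ∈ range n, a j * b ^ (j + 1) / (j + 1) := by
  rw [intervalIntegral.integral_finsetSum fun j _ =>
    ((continuous_pow j).const_mul (a j)).intervalIntegrable _ _]
  refine sum_congr rfl fun j _ => ?_
  rw [intervalIntegral.integral_const_mul, integral_pow, zero_pow j.succ_ne_zero]
  ring

theorem Lop_eqOn_Ico {ε : ℝ} {f p : ℝ → ℝ} (hp : Continuous p) (hf : EqOn f p (Ico 0 ε)) :
    EqOn (Lop ε f)
      (fun t => (1 / ε * ∫ u in (0:ℝ)..ε, p u) * t - ∫ s in (0:ℝ)..t, p s) (Ico 0 ε) := by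
  intro t ⟨ht0, htε⟩
  have hmean : ∫ u in (0:ℝ)..ε, f u = ∫ u in (0:ℝ)..ε, p u :=
    intervalIntegral.integral_congr_Ioo_of_le (ht0.trans htε.le) fun u hu =>
      hf (Ioo_subset_Ico_self hu)
  calc Lop ε f t = ∫ s in (0:ℝ)..t, (1 / ε * ∫ u in (0:ℝ)..ε, p u) - p s := by
        simp only [Lop, hmean]
        refine intervalIntegral.integral_congr fun s hs => ?_
        rw [uIcc_of_le ht0] at hs
        simp only [hf ⟨hs.1, hs.2.trans_lt htε⟩]
    _ = (1 / ε * ∫ u in (0:ℝ)..ε, p u) * t - ∫ s in (0:ℝ)..t, p s := by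
        rw [intervalIntegral.integral_sub intervalIntegrable_const (hp.intervalIntegrable 0 t),
          intervalIntegral.integral_const, smul_eq_mul, sub_zero, mul_comm t]

theorem continuous_sawPoly (ε : ℝ) (i : ℕ) : Continuous (sawPoly ε i) := by
  unfold sawPoly; fun_prop

theorem sawPoly_zero (ε t : ℝ) : sawPoly ε 0 t = ε - t := by
  simp only [sawPoly, sum_range_succ, sum_range_zero, coeff]
  push_cast
  ring

theorem integral_sawPoly (ε : ℝ) (i : ℕ) (t : ℝ) :
    ∫ s in (0:ℝ)..t, sawPoly ε i s
      = ∑ j ∈ range (i + 2), (coeff i j : ℝ) * ε ^ (i + 1 - j) * t ^ (j + 1) / (j + 1) :=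
  integral_sum_monomials _ _ _

theorem mean_sawPoly {ε : ℝ} (hε : ε ≠ 0) (i : ℕ) :
    1 / ε * ∫ t in (0:ℝ)..ε, sawPoly ε i t = mean i * ε ^ (i + 1) := by
  rw [integral_sawPoly, mean, polyMean, Rat.cast_sum, mul_sum, sum_mul]
  refine sum_congr rfl fun j hj => ?_
  have hpow : ε ^ (i + 1 - j) * ε ^ (j + 1) = ε * ε ^ (i + 1) := by
    rw [← pow_add, ← pow_succ']
    congr 1
    have := mem_range.mp hj
    omega
  push_cast
  field_simp
  linear_combination (coeff i j : ℝ) * hpow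

theorem sawPoly_succ (ε : ℝ) (i : ℕ) (t : ℝ) :
    mean i * ε ^ (i + 1) * t - ∫ s in (0:ℝ)..t, sawPoly ε i s = sawPoly ε (i + 1) t := by
  have hterm : ∀ k ∈ range (i + 1),
      (coeff (i + 1) (k + 1 + 1) : ℝ) * ε ^ (i + 1 + 1 - (k + 1 + 1)) * t ^ (k + 1 + 1)
        = -((coeff i (k + 1) : ℝ) * ε ^ (i + 1 - (k + 1)) * t ^ (k + 1 + 1)
            / ((k + 1 : ℕ) + 1)) := by
    intro k _
    rw [coeff, Nat.add_sub_add_right]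
    push_cast
    ring
  rw [integral_sawPoly, sawPoly, sum_range_succ' _ (i + 1), sum_range_succ' _ (i + 2),
    sum_range_succ' _ (i + 1), sum_congr rfl hterm, sum_neg_distrib]
  simp only [mean, coeff, Nat.reduceSubDiff, Nat.cast_add, Nat.cast_one, CharP.cast_eq_zero,
    Rat.cast_sub, Rat.cast_zero, tsub_zero, add_tsub_cancel_right, zero_add, add_zero, zero_mul,
    mul_one, div_one, pow_zero, pow_one]
  ring

end Sawtooth

open Sawtooth

theorem stmt_12 :
    ∃ (C : ℕ → ℕ → ℚ) (α : ℕ → ℚ), α 0 = 1/2 ∧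
      ∀ ε : ℝ, 0 < ε → ∀ h : ℝ → ℝ,
        (∀ t : ℝ, 0 ≤ t → h (t + ε) = h t) →
        (∀ t ∈ Ico (0:ℝ) ε, h t = ε - t) →
        ∀ i : ℕ,
          (∀ t ∈ Ico (0:ℝ) ε,
            (Lop ε)^[i] h t
              = ∑ j ∈ Finset.range (i+2), (C i j : ℝ) * ε^(i+1-j) * t^j) ∧
          (1/ε) * (∫ t in (0:ℝ)..ε, (Lop ε)^[i] h t) = (α i : ℝ) * ε^(i+1) := by
  refine ⟨coeff, mean, by norm_num [mean, polyMean, coeff, Finset.sum_range_succ], ?_⟩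
  intro ε hε h _ hval i
  have hiter : ∀ n, EqOn ((Lop ε)^[n] h) (sawPoly ε n) (Ico 0 ε) := by
    intro n
    induction n with
    | zero => intro t ht; rw [Function.iterate_zero_apply, hval t ht, sawPoly_zero]
    | succ n ih =>
      intro t ht
      rw [Function.iterate_succ_apply', Lop_eqOn_Ico (continuous_sawPoly ε n) ih ht,
        mean_sawPoly hε.ne']
      exact sawPoly_succ ε n t
  refine ⟨hiter i, ?_⟩
  rw [intervalIntegral.integral_congr_Ioo_of_le hε.le fun t ht => hiter i (Ioo_subset_Ico_self ht),
    mean_sawPoly hε.ne']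
end
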